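/- arXiv:1810.07035 — 2 statements merged into one kernel-verified Lean document; each statement's English description precedes it below -/
import Mathlib

section
/- Let $U, V$ be Hilbert spaces, $T : U \to V'$ a bounded linear bijection, and define on $V$ the equivalent norm $|||v||| := \|T^* v\|_{U}$ (where $T^* : V \to U$ is the adjoint, identifying $U' \cong U$). Then with respect to the norms $\|\cdot\|_U$ on $U$ and $|||\cdot|||$ on $V$, the condition number of $T$ equals one: $\|T\|_{\mathcal{L}(U,V')} \cdot \|T^{-1}\|_{\mathcal{L}(V',U)} = 1$, i.e. $T$ is an isometry. -/
/-!
Since `T u v = ⟪T* v, u⟫`, the supremum is that of `⟪x, u⟫` over the points `x` of the range of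
`T*` in the closed unit ball. The orthogonal complement of this range is the set of `u` with
`T u = 0`, which is trivial because `T` is injective; so the range is dense, and by continuity
the supremum may be taken over the whole unit ball, where it equals `‖u‖`.
-/

open InnerProductSpace Metric Set

section
variable {E : Type*} [NormedAddCommGroup E] [InnerProductSpace ℝ E]

theorem norm_le_of_forall_inner_le {u : E} {b : ℝ}
    (h : ∀ y ∈ closedBall (0 : E) 1, ⟪y, u⟫_ℝ ≤ b) : ‖u‖ ≤ b := by
  rcases eq_or_ne u 0 with rfl | hu
  · simpa using h 0 (by simp)
  · have hunit : ‖‖u‖⁻¹ • u‖ = 1 := by simp [norm_smul, hu]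
    simpa [real_inner_smul_left, real_inner_self_eq_norm_sq, sq, hu] using
      h _ (mem_closedBall_zero_iff.mpr hunit.le)

theorem isLUB_inner_of_denseRange {ι : Type*} {g : ι → E} (hg : DenseRange g) (u : E) :
    IsLUB {r | ∃ i, ‖g i‖ ≤ 1 ∧ r = ⟪g i, u⟫_ℝ} ‖u‖ := by
  refine ⟨?_, fun b hb => norm_le_of_forall_inner_le ?_⟩
  · rintro _ ⟨i, hi, rfl⟩
    exact (real_inner_le_norm _ _).trans (mul_le_of_le_one_left (norm_nonneg u) hi)
  · have hsub : ball (0 : E) 1 ∩ range g ⊆ {y | ⟪y, u⟫_ℝ ≤ b} := by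
      rintro _ ⟨hy, i, rfl⟩
      exact hb ⟨i, (mem_ball_zero_iff.mp hy).le, rfl⟩
    have hclosed : IsClosed {y : E | ⟪y, u⟫_ℝ ≤ b} := isClosed_le (by fun_prop) continuous_const
    rw [← closure_ball (0 : E) one_ne_zero]
    exact closure_minimal ((hg.open_subset_closure_inter isOpen_ball).trans
      (closure_minimal hsub hclosed)) hclosed

theorem LinearMap.denseRange_of_forall_inner_eq_zero [CompleteSpace E] {F : Type*}
    [AddCommGroup F] [Module ℝ F] (A : F →ₗ[ℝ] E)
    (h : ∀ u, (∀ v, ⟪A v, u⟫_ℝ = 0) → u = 0) : DenseRange A := by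
  change Dense (LinearMap.range A : Set E)
  rw [Submodule.dense_iff_topologicalClosure_eq_top, Submodule.topologicalClosure_eq_top_iff,
    Submodule.eq_bot_iff]
  exact fun u hu => h u fun v => (LinearMap.range A).inner_right_of_mem_orthogonal ⟨v, rfl⟩ hu

end

theorem denseRange_adjoint_of_injective {U V : Type*} [NormedAddCommGroup U] [InnerProductSpace ℝ U]
    [CompleteSpace U] [NormedAddCommGroup V] [InnerProductSpace ℝ V]
    {T : U →L[ℝ] (V →L[ℝ] ℝ)} (hT : Function.Injective T) {Tstar : V → U}
    (hadj : ∀ u v, T u v = ⟪Tstar v, u⟫_ℝ) : DenseRange Tstar := by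
  let A : V →ₗ[ℝ] U := (toDual ℝ U).symm.toLinearEquiv.toLinearMap ∘ₗ T.flip.toLinearMap
  have hA : ⇑A = Tstar := funext fun v => ext_inner_right ℝ fun u => by
    simp [A, toDual_symm_apply, hadj]
  rw [← hA]
  refine A.denseRange_of_forall_inner_eq_zero fun u hu => hT ?_
  ext v
  simpa [hA, hadj] using hu v

theorem renormed_transport_is_isometry_general
    {U V : Type*} [NormedAddCommGroup U] [InnerProductSpace ℝ U] [CompleteSpace U]
    [NormedAddCommGroup V] [InnerProductSpace ℝ V]
    (T : U →L[ℝ] (V →L[ℝ] ℝ)) (hT : Function.Bijective T)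
    (Tstar : V → U)
    (hadj : ∀ (u : U) (v : V), T u v = (inner ℝ (Tstar v) u : ℝ)) :
    ∀ u : U, ‖u‖ = sSup {r : ℝ | ∃ v : V, ‖Tstar v‖ ≤ 1 ∧ r = T u v} := by
  intro u
  have hlub := isLUB_inner_of_denseRange (denseRange_adjoint_of_injective hT.injective hadj) u
  simp_rw [← hadj] at hlub
  exact (hlub.csSup_eq hlub.nonempty).symm

/-- With the test space `V` renormed by `|||v||| := ‖T* v‖_U`, the operator
`T : U → V'` becomes an isometry (condition number one): for every `u`, the
dual norm of `T u` with respect to `|||·|||`, i.e. the supremum of `T u v`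
over the `|||·|||`-unit ball, equals `‖u‖_U`. Here `Tstar : V → U` realizes
the adjoint via the Riesz identification `U' ≅ U`. -/
theorem renormed_transport_is_isometry
    {U V : Type*} [NormedAddCommGroup U] [InnerProductSpace ℝ U] [CompleteSpace U]
    [NormedAddCommGroup V] [InnerProductSpace ℝ V] [CompleteSpace V]
    (T : U →L[ℝ] (V →L[ℝ] ℝ)) (hT : Function.Bijective T)
    (Tstar : V → U)
    (hadj : ∀ (u : U) (v : V), T u v = (inner ℝ (Tstar v) u : ℝ)) :
    ∀ u : U, ‖u‖ = sSup {r : ℝ | ∃ v : V, ‖Tstar v‖ ≤ 1 ∧ r = T u v} :=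
  renormed_transport_is_isometry_general T hT Tstar hadj
end

section
/- Let $0 < \alpha \leq \sigma_{\min} \leq \sigma_{\max}$ and suppose that $\sigma_{\max} - \alpha < \sigma_{\min}$ fails (dominating scattering). Then the equation $\frac{a}{a+\alpha} = \frac{(\sigma_{\max}-\alpha)(\sigma_{\max}+a)}{(\sigma_{\min}+a)^2}$ has a unique positive solution $a^* > 0$, i.e., the function $h(a) = \frac{a}{a+\alpha} - \frac{(\sigma_{\max}-\alpha)(\sigma_{\max}+a)}{(\sigma_{\min}+a)^2}$ has exactly one zero on $(0,\infty)$. -/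
private lemma optimal_shift_aux (α σmin σmax : ℝ) (hα : 0 < α) (h1 : α ≤ σmin)
    (h2 : σmin ≤ σmax) {x y : ℝ} (hx : 0 < x) (hxy : x < y)
    (hex : x / (x + α) = (σmax - α) * (σmax + x) / ((σmin + x) ^ 2))
    (hey : y / (y + α) = (σmax - α) * (σmax + y) / ((σmin + y) ^ 2)) : False := by
  have hs : 0 ≤ σmax - α := by linarith
  have hy : 0 < y := lt_trans hx hxy
  have hax : 0 < x + α := by linarith
  have hay : 0 < y + α := by linarith
  have hmx : 0 < σmin + x := by linarith
  have hmy : 0 < σmin + y := by linarith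
  have h3 : x / (x + α) < y / (y + α) := by
    rw [div_lt_div_iff₀ hax hay]; nlinarith
  have hfac : (σmax + x) * (σmin + y) ^ 2 - (σmax + y) * (σmin + x) ^ 2
      = (y - x) * (2 * σmax * σmin + σmax * (x + y) - σmin ^ 2 + x * y) := by ring
  have hfacpos : 0 ≤ (σmax + x) * (σmin + y) ^ 2 - (σmax + y) * (σmin + x) ^ 2 := by
    rw [hfac]
    have : 0 ≤ 2 * σmax * σmin + σmax * (x + y) - σmin ^ 2 + x * y := by nlinarith
    nlinarith
  have h4 : (σmax - α) * (σmax + y) / ((σmin + y) ^ 2)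
      ≤ (σmax - α) * (σmax + x) / ((σmin + x) ^ 2) := by
    rw [div_le_div_iff₀ (by positivity) (by positivity)]
    nlinarith [mul_nonneg hs hfacpos]
  linarith [hex ▸ hey ▸ h4]

/-- Existence and uniqueness of the optimal shift parameter `a*` solving
`a/(a+α) = (σmax - α)(σmax + a)/(σmin + a)^2` in the dominating scattering
regime, i.e. when `σmax - α < σmin` fails. -/
theorem optimal_shift_exists_unique
    (α σmin σmax : ℝ) (hα : 0 < α) (h1 : α ≤ σmin) (h2 : σmin ≤ σmax)
    (hdom : σmin ≤ σmax - α) :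
    ∃! a : ℝ, 0 < a ∧
      a / (a + α) = (σmax - α) * (σmax + a) / ((σmin + a) ^ 2) := by
  have hs : 0 < σmax - α := by linarith
  have hσmax : 0 < σmax := by linarith
  -- the cross-multiplied polynomial
  set p : ℝ → ℝ := fun a => a * (σmin + a) ^ 2 - (σmax - α) * (σmax + a) * (a + α) with hp
  have hcont : ContinuousOn p (Set.Icc 0 (9 * σmax)) := by fun_prop
  have hp0 : p 0 < 0 := by
    simp only [hp]
    nlinarith [mul_pos (mul_pos hs hσmax) hα]
  have hpM : 0 < p (9 * σmax) := by
    simp only [hp]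
    have hb1 : σmax - α ≤ σmax := by linarith
    have hb2 : 9 * σmax + α ≤ 10 * σmax := by linarith
    have hL : 9 * σmax * (9 * σmax) ^ 2 ≤ 9 * σmax * (σmin + 9 * σmax) ^ 2 := by
      apply mul_le_mul_of_nonneg_left _ (by linarith)
      apply pow_le_pow_left₀ (by linarith) (by linarith)
    have hR : (σmax - α) * (σmax + 9 * σmax) * (9 * σmax + α)
        ≤ σmax * (10 * σmax) * (10 * σmax) := by
      apply mul_le_mul (mul_le_mul hb1 (by linarith) (by linarith) (by linarith)) hb2
        (by linarith) (by positivity)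
    nlinarith [mul_pos (mul_pos hσmax hσmax) hσmax]
  have hle : (0:ℝ) ≤ 9 * σmax := by linarith
  have hivt := intermediate_value_Icc hle hcont
  have hmem : (0:ℝ) ∈ Set.Icc (p 0) (p (9 * σmax)) := ⟨le_of_lt hp0, le_of_lt hpM⟩
  obtain ⟨a, haI, hpa⟩ := hivt hmem
  have hapos : 0 < a := by
    rcases lt_or_eq_of_le haI.1 with h | h
    · exact h
    · exfalso; rw [← h] at hpa; linarith
  have hax : 0 < a + α := by linarith
  have hma : 0 < σmin + a := by linarith
  have heq : a / (a + α) = (σmax - α) * (σmax + a) / ((σmin + a) ^ 2) := by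
    rw [div_eq_div_iff (ne_of_gt hax) (by positivity)]
    simp only [hp] at hpa
    nlinarith [hpa]
  refine ⟨a, ⟨hapos, heq⟩, ?_⟩
  rintro b ⟨hbpos, hbeq⟩
  rcases lt_trichotomy b a with h | h | h
  · exact absurd (optimal_shift_aux α σmin σmax hα h1 h2 hbpos h hbeq heq) (fun f => f)
  · exact h
  · exact absurd (optimal_shift_aux α σmin σmax hα h1 h2 hapos h heq hbeq) (fun f => f)
end
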